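/- Instantiation commutes with evaluation for partially mapped BGPs: for any BGP P, graph H, and mapping μ with dom(μ) ⊆ var(P) and μ(P) a BGP over the same alphabet, {σ | σ ∈ ⟦P⟧_H, σ ⊇ μ} = {μ ∪ ρ | ρ ∈ ⟦μP⟧_H}. -/
import Mathlib


/-- Constants (IRIs/literals) -/
abbrev Const := ℕ
/-- Variables -/
abbrev Var := ℕ

/-- A term is a constant or a variable. -/
inductive Term where
  | c : Const → Term
  | v : Var → Term
deriving DecidableEq

/-- Triple pattern -/
abbrev TP := Term × Term × Term
/-- Basic graph pattern (also used for graphs, as sets of ground triple patterns) -/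
abbrev BGP := Set TP
/-- (Partial) mapping from variables to constants -/
abbrev Mapping := Var → Option Const

def termVars : Term → Set Var
  | .c _ => ∅
  | .v x => {x}

def tpVars (t : TP) : Set Var := termVars t.1 ∪ termVars t.2.1 ∪ termVars t.2.2

def bgpVars (P : BGP) : Set Var := ⋃ t ∈ P, tpVars t

def termConsts : Term → Set Const
  | .c a => {a}
  | .v _ => ∅

def tpConsts (t : TP) : Set Const := termConsts t.1 ∪ termConsts t.2.1 ∪ termConsts t.2.2

def bgpConsts (P : BGP) : Set Const := ⋃ t ∈ P, tpConsts t

/-- A graph is a BGP all of whose triples are ground. -/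
def GroundBGP (P : BGP) : Prop := ∀ t ∈ P, tpVars t = ∅

def applyTerm (μ : Mapping) : Term → Term
  | .c a => .c a
  | .v x =>
    match μ x with
    | some a => .c a
    | none => .v x

def applyTP (μ : Mapping) (t : TP) : TP :=
  (applyTerm μ t.1, applyTerm μ t.2.1, applyTerm μ t.2.2)

def applyBGP (μ : Mapping) (P : BGP) : BGP := applyTP μ '' P

/-- Domain of a mapping -/
def mdom (μ : Mapping) : Set Var := {x | μ x ≠ none}

/-- Evaluation of a BGP over a graph: ⟦P⟧_G = {μ | dom(μ) = var(P), μP ⊆ G}. -/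
def bgpEval (P G : BGP) : Set Mapping := {μ | mdom μ = bgpVars P ∧ applyBGP μ P ⊆ G}

/-- A completeness statement Compl(P_C). -/
structure CS where
  pat : BGP

/-- The CONSTRUCT query associated to a completeness statement. -/
def constructQ (C : CS) (G : BGP) : BGP := ⋃ μ ∈ bgpEval C.pat G, applyBGP μ C.pat

/-- Transfer operator T_𝒞. -/
def transfer (𝒞 : Set CS) (G : BGP) : BGP := ⋃ C ∈ 𝒞, constructQ C G

/-- (G, G') is a valid extension pair wrt 𝒞. -/
def Valid (𝒞 : Set CS) (G G' : BGP) : Prop :=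
  G ⊆ G' ∧ GroundBGP G' ∧ transfer 𝒞 G' ⊆ G

/-- 𝒞, G ⊨ Compl(P). -/
def Entails (𝒞 : Set CS) (G : BGP) (P : BGP) : Prop :=
  ∀ G', Valid 𝒞 G G' → bgpEval P G' = bgpEval P G

def emptyMap : Mapping := fun _ => none

/-- Union of two mappings (left-biased; used on mappings with disjoint domains). -/
def munion (μ ν : Mapping) : Mapping := fun x => (μ x).orElse (fun _ => ν x)

/-- Partially mapped BGP -/
abbrev PMBGP := BGP × Mapping

/-- Evaluation of a partially mapped BGP: ⟦(P, ν)⟧_G = {ν ∪ ρ | ρ ∈ ⟦P⟧_G}. -/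
def evalPM (pm : PMBGP) (G : BGP) : Set Mapping :=
  {σ | ∃ ρ ∈ bgpEval pm.1 G, σ = munion pm.2 ρ}

def evalPMSet (S : Set PMBGP) (G : BGP) : Set Mapping := ⋃ pm ∈ S, evalPM pm G

/-- S ≡_{𝒞,G} S' : equal evaluations over every valid extension pair. -/
def EquivCG (𝒞 : Set CS) (G : BGP) (S S' : Set PMBGP) : Prop :=
  ∀ G', Valid 𝒞 G G' → evalPMSet S G' = evalPMSet S' G'

/-- The freeze mapping, sending each variable to a (fresh) constant. -/
def freezeMap (frz : Var → Const) : Mapping := fun x => some (frz x)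

/-- frz is a genuine freeze mapping: injective and its values are fresh. -/
def Fresh (frz : Var → Const) (𝒞 : Set CS) (G P : BGP) : Prop :=
  Function.Injective frz ∧
    ∀ x, frz x ∉ bgpConsts G ∪ bgpConsts P ∪ ⋃ C ∈ 𝒞, bgpConsts C.pat

/-- Crucial part: cruc(P, 𝒞, G) = P ∩ id̃⁻¹(T_𝒞(P̃ ∪ G)). -/
def cruc (P : BGP) (𝒞 : Set CS) (G : BGP) (frz : Var → Const) : BGP :=
  {t | t ∈ P ∧ applyTP (freezeMap frz) t ∈ transfer 𝒞 (applyBGP (freezeMap frz) P ∪ G)}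

/-- Equivalent partial grounding operator. -/
def epg (pm : PMBGP) (𝒞 : Set CS) (G : BGP) (frz : Var → Const) : Set PMBGP :=
  {q | ∃ μ ∈ bgpEval (cruc pm.1 𝒞 G frz) G, q = (applyBGP μ pm.1, munion pm.2 μ)}

/-- A partially mapped BGP is saturated wrt 𝒞 and G. -/
def Saturated (pm : PMBGP) (𝒞 : Set CS) (G : BGP) (frz : Var → Const) : Prop :=
  epg pm 𝒞 G frz = {pm}

/-- Partially mapped BGPs reachable from (P, ∅) by the saturation algorithm's epg steps. -/
inductive Reach (𝒞 : Set CS) (G : BGP) (frz : Var → Const) (P : BGP) : PMBGP → Prop where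
  | init : Reach 𝒞 G frz P (P, emptyMap)
  | step {pm pm' : PMBGP} : Reach 𝒞 G frz P pm → epg pm 𝒞 G frz ≠ {pm} →
      pm' ∈ epg pm 𝒞 G frz → Reach 𝒞 G frz P pm'

/-- The set Ω of mappings returned by the saturation algorithm sat(P, 𝒞, G). -/
def satSet (𝒞 : Set CS) (G : BGP) (frz : Var → Const) (P : BGP) : Set Mapping :=
  {ν | ∃ P', Reach 𝒞 G frz P (P', ν) ∧ Saturated (P', ν) 𝒞 G frz}

/-- μ is contained in σ (σ extends μ). -/
def MapLE (μ σ : Mapping) : Prop := ∀ x a, μ x = some a → σ x = some a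


lemma applyTerm_munion (μ ρ : Mapping) (u : Term) :
    applyTerm (munion μ ρ) u = applyTerm ρ (applyTerm μ u) := by
  cases u with
  | c a => simp [applyTerm]
  | v x =>
    cases h : μ x with
    | none => simp [applyTerm, munion, h]
    | some a => simp [applyTerm, munion, h]

lemma applyTP_munion (μ ρ : Mapping) (t : TP) :
    applyTP (munion μ ρ) t = applyTP ρ (applyTP μ t) := by
  simp [applyTP, applyTerm_munion]

lemma applyBGP_munion (μ ρ : Mapping) (P : BGP) :
    applyBGP (munion μ ρ) P = applyBGP ρ (applyBGP μ P) := by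
  simp [applyBGP, Set.image_image, applyTP_munion]

lemma termVars_apply (μ : Mapping) (u : Term) :
    termVars (applyTerm μ u) = termVars u \ mdom μ := by
  cases u with
  | c a => simp [applyTerm, termVars]
  | v x =>
    cases h : μ x with
    | none =>
      simp [applyTerm, termVars, h, Set.diff_eq, Set.ext_iff, mdom]
    | some a =>
      simp [applyTerm, termVars, h]
      symm; rw [Set.diff_eq_empty]
      intro y hy; simp at hy; subst hy; simp [mdom, h]

lemma tpVars_apply (μ : Mapping) (t : TP) :
    tpVars (applyTP μ t) = tpVars t \ mdom μ := by
  simp [tpVars, applyTP, termVars_apply, Set.union_diff_distrib]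

lemma bgpVars_apply (μ : Mapping) (P : BGP) :
    bgpVars (applyBGP μ P) = bgpVars P \ mdom μ := by
  simp only [bgpVars, applyBGP, Set.biUnion_image, tpVars_apply]
  ext x; simp [Set.mem_diff]; tauto

/-- Instantiation commutes with evaluation:
{σ ∈ ⟦P⟧_H | σ ⊇ μ} = {μ ∪ ρ | ρ ∈ ⟦μP⟧_H}. -/
theorem stmt19 (P H : BGP) (μ : Mapping) (hdom : mdom μ ⊆ bgpVars P) :
    {σ | σ ∈ bgpEval P H ∧ MapLE μ σ} =
      {σ | ∃ ρ ∈ bgpEval (applyBGP μ P) H, σ = munion μ ρ} := by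
  ext σ
  constructor
  · rintro ⟨⟨hd, hsub⟩, hle⟩
    refine ⟨fun x => if μ x = none then σ x else none, ⟨?_, ?_⟩, ?_⟩
    · rw [bgpVars_apply, ← hd]
      ext x
      simp only [mdom, Set.mem_setOf_eq, Set.mem_diff]
      by_cases h : μ x = none <;> simp [h]
    · have : munion μ (fun x => if μ x = none then σ x else none) = σ := by
        funext x
        cases h : μ x with
        | none => simp [munion, h]
        | some a => simp [munion, h]; exact (hle x a h).symm
      rw [← applyBGP_munion, this]; exact hsub
    · funext x
      cases h : μ x with
      | none => simp [munion, h]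
      | some a => simp [munion, h]; exact hle x a h
  · rintro ⟨ρ, ⟨hd, hsub⟩, rfl⟩
    rw [bgpVars_apply] at hd
    refine ⟨⟨?_, ?_⟩, ?_⟩
    · ext x
      simp only [mdom, Set.mem_setOf_eq, munion]
      cases h : μ x with
      | none =>
        simp only [Option.orElse, h]
        have : (x ∈ mdom ρ) ↔ x ∈ bgpVars P \ mdom μ := by rw [hd]
        simp only [mdom, Set.mem_setOf_eq, Set.mem_diff] at this
        constructor
        · intro hr; exact (this.mp hr).1
        · intro hp; exact this.mpr ⟨hp, by simp [mdom, h]⟩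
      | some a =>
        simp only [Option.orElse, h]
        simpa using hdom (show x ∈ mdom μ by simp [mdom, h])
    · rw [applyBGP_munion]; exact hsub
    · intro x a h; simp [munion, h]
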